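/- arXiv:2502.05154 — 5 statements merged into one kernel-verified Lean document; each statement's English description precedes it below -/
import Mathlib

section
/- Let H be a complex Hilbert space and A, B bounded self-adjoint operators on H. For every unit vector h, Δ_h(A)·Δ_h(B) ≥ (1/2)|⟨[A,B]h, h⟩|, where Δ_h(A) := ‖Ah − ⟨Ah,h⟩h‖ and [A,B] := AB − BA (Heisenberg–Robertson uncertainty principle). -/
/-!
Replacing `A`, `B` by `A - ⟪A h, h⟫ • 1`, `B - ⟪B h, h⟫ • 1` keeps them symmetric (the shifts are
real) and leaves the commutator unchanged. For symmetric `A`, `B` one has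
`⟪[A, B] x, x⟫ = ⟪B x, A x⟫ - ⟪A x, B x⟫`, whose norm is at most `2 ‖A x‖ ‖B x‖` by Cauchy–Schwarz.
-/

open scoped InnerProductSpace

theorem lie_sub_smul_one_sub_smul_one {R A : Type*} [CommRing R] [Ring A] [Algebra R A]
    (a b : A) (r s : R) : ⁅a - r • 1, b - s • 1⁆ = ⁅a, b⁆ := by
  simp only [Ring.lie_def, sub_mul, mul_sub, smul_mul_assoc, mul_smul_comm, one_mul, mul_one,
    smul_sub, smul_smul, mul_comm r s]
  abel

namespace LinearMap.IsSymmetric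

variable {𝕜 E : Type*} [RCLike 𝕜] [NormedAddCommGroup E] [InnerProductSpace 𝕜 E]
  {A B : E →ₗ[𝕜] E}

theorem sub_inner_apply_self_smul_one (hA : A.IsSymmetric) (y : E) :
    (A - ⟪A y, y⟫_𝕜 • 1).IsSymmetric :=
  hA.sub (IsSymmetric.one.smul (hA.conj_inner_sym y y))

theorem inner_lie_apply_self (hA : A.IsSymmetric) (hB : B.IsSymmetric) (x : E) :
    ⟪⁅A, B⁆ x, x⟫_𝕜 = ⟪B x, A x⟫_𝕜 - ⟪A x, B x⟫_𝕜 := by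
  rw [Ring.lie_def, sub_apply, inner_sub_left, Module.End.mul_apply, Module.End.mul_apply,
    hA (B x), hB (A x)]

theorem norm_inner_lie_apply_self_le (hA : A.IsSymmetric) (hB : B.IsSymmetric) (x : E) :
    ‖⟪⁅A, B⁆ x, x⟫_𝕜‖ ≤ 2 * (‖A x‖ * ‖B x‖) := by
  rw [hA.inner_lie_apply_self hB]
  calc ‖⟪B x, A x⟫_𝕜 - ⟪A x, B x⟫_𝕜‖ ≤ ‖⟪B x, A x⟫_𝕜‖ + ‖⟪A x, B x⟫_𝕜‖ := norm_sub_le _ _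
    _ ≤ ‖B x‖ * ‖A x‖ + ‖A x‖ * ‖B x‖ :=
      add_le_add (norm_inner_le_norm _ _) (norm_inner_le_norm _ _)
    _ = 2 * (‖A x‖ * ‖B x‖) := by ring

theorem robertson_uncertainty (hA : A.IsSymmetric) (hB : B.IsSymmetric) (x : E) :
    ‖⟪⁅A, B⁆ x, x⟫_𝕜‖ ≤ 2 * (‖A x - ⟪A x, x⟫_𝕜 • x‖ * ‖B x - ⟪B x, x⟫_𝕜 • x‖) := by
  have key := (hA.sub_inner_apply_self_smul_one x).norm_inner_lie_apply_self_le
    (hB.sub_inner_apply_self_smul_one x) x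
  simpa only [lie_sub_smul_one_sub_smul_one, sub_apply, smul_apply, Module.End.one_apply]
    using key

end LinearMap.IsSymmetric

theorem heisenberg_robertson_general {H : Type*} [NormedAddCommGroup H] [InnerProductSpace ℂ H]
    [CompleteSpace H] (A B : H →L[ℂ] H) (hA : IsSelfAdjoint A) (hB : IsSelfAdjoint B)
    (h : H) :
    (1 / 2 : ℝ) * ‖⟪(A ∘L B - B ∘L A) h, h⟫_ℂ‖ ≤
      ‖A h - ⟪A h, h⟫_ℂ • h‖ * ‖B h - ⟪B h, h⟫_ℂ • h‖ := by
  have commutator_eq_lie :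
      ((A ∘L B - B ∘L A : H →L[ℂ] H) : H →ₗ[ℂ] H) = ⁅(A : H →ₗ[ℂ] H), (B : H →ₗ[ℂ] H)⁆ := by
    ext x
    simp [Ring.lie_def]
  have key := hA.isSymmetric.robertson_uncertainty hB.isSymmetric h
  rw [← commutator_eq_lie] at key
  simp only [ContinuousLinearMap.coe_coe] at key
  linarith

/-- Heisenberg–Robertson uncertainty principle. -/
theorem heisenberg_robertson {H : Type*} [NormedAddCommGroup H] [InnerProductSpace ℂ H]
    [CompleteSpace H] (A B : H →L[ℂ] H) (hA : IsSelfAdjoint A) (hB : IsSelfAdjoint B)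
    (h : H) (hh : ‖h‖ = 1) :
    (1 / 2 : ℝ) * ‖⟪(A ∘L B - B ∘L A) h, h⟫_ℂ‖ ≤
      ‖A h - ⟪A h, h⟫_ℂ • h‖ * ‖B h - ⟪B h, h⟫_ℂ • h‖ :=
  heisenberg_robertson_general A B hA hB h
end

section
/- Let E be a Hilbert C*-module over a unital C*-algebra A, and let T, S be bounded adjointable self-adjoint operators on E. For x ∈ E with ⟨x,x⟩ = 1, Δ_x(T)·Δ_x(S) ≥ ‖⟨Tx,Sx⟩ − ⟨Tx,x⟩⟨Sx,x⟩‖, where Δ_x(T) := ‖Tx − ⟨Tx,x⟩x‖. -/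
open scoped RightActions

/-- The Hilbert C⋆-module class as it stood in Mathlib (Dec 2024): right `A`-action via `Aᵐᵒᵖ`,
inner product `A`-linear on the right in the second argument. -/
class CStarModuleRight (A : outParam <| Type*) (E : Type*) [NonUnitalSemiring A] [StarRing A]
    [Module ℂ A] [AddCommGroup E] [Module ℂ E] [PartialOrder A] [SMul Aᵐᵒᵖ E] [Norm A] [Norm E]
    extends Inner A E where
  inner_add_right {x y z : E} : Inner.inner A x (y + z) = Inner.inner A x y + Inner.inner A x z
  inner_self_nonneg {x : E} : 0 ≤ Inner.inner A x x
  inner_self {x : E} : Inner.inner A x x = 0 ↔ x = 0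
  inner_op_smul_right {a : A} {x y : E} : Inner.inner A x (y <• a) = Inner.inner A x y * a
  inner_smul_right_complex {z : ℂ} {x y : E} : Inner.inner A x (z • y) = z • Inner.inner A x y
  star_inner (x y : E) : star (Inner.inner A x y) = Inner.inner A y x
  norm_eq_sqrt_norm_inner_self (x : E) : ‖x‖ = √‖Inner.inner A x x‖

variable {A E : Type*} [CStarAlgebra A] [PartialOrder A] [StarOrderedRing A]
  [AddCommGroup E] [Module ℂ E] [SMul Aᵐᵒᵖ E] [Norm E] [CStarModuleRight A E]

local notation "⟪" x ", " y "⟫" => (inner A x y : A)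

/-!
When `⟪x, x⟫ = 1` and `⟪S x, x⟫` is self-adjoint, expanding the inner product of the deviations
`T x - x <• ⟪T x, x⟫` and `S x - x <• ⟪S x, x⟫` leaves exactly `⟪T x, S x⟫ - ⟪T x, x⟫ * ⟪S x, x⟫`,
so the inequality is Cauchy–Schwarz `‖⟪y, z⟫‖ ≤ ‖y‖ * ‖z‖` for Hilbert C⋆-modules. The latter
follows from positivity of `⟪v, v⟫` for `v = y <• ⟪y, z⟫ - ‖y‖ ^ 2 • z`, together with the
C⋆-bound `star a * b * a ≤ ‖b‖ • (star a * a)` applied to `b = ⟪y, y⟫`.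
-/

namespace CStarModuleRight

section

omit [StarOrderedRing A]

lemma inner_sub_right {x y z : E} : ⟪x, y - z⟫ = ⟪x, y⟫ - ⟪x, z⟫ := by
  rw [sub_eq_add_neg, ← neg_one_smul ℂ z, inner_add_right, inner_smul_right_complex,
    neg_one_smul, ← sub_eq_add_neg]

lemma inner_sub_left {x y z : E} : ⟪x - y, z⟫ = ⟪x, z⟫ - ⟪y, z⟫ := by
  rw [← star_inner z, inner_sub_right, star_sub, star_inner, star_inner]

lemma inner_zero_right {x : E} : ⟪x, 0⟫ = 0 := by
  simpa using inner_sub_right (x := x) (y := 0) (z := 0)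

lemma inner_op_smul_left {a : A} {x y : E} : ⟪x <• a, y⟫ = star a * ⟪x, y⟫ := by
  rw [← star_inner y, inner_op_smul_right, star_mul, star_inner]

lemma inner_smul_right_real {r : ℝ} {x y : E} : ⟪x, (r : ℂ) • y⟫ = r • ⟪x, y⟫ := by
  rw [inner_smul_right_complex, Complex.coe_smul]

lemma inner_smul_left_real {r : ℝ} {x y : E} : ⟪(r : ℂ) • x, y⟫ = r • ⟪x, y⟫ := by
  rw [← star_inner y, inner_smul_right_real, star_smul, star_inner, star_trivial]

lemma norm_sq_eq_norm_inner_self (x : E) : ‖x‖ ^ 2 = ‖⟪x, x⟫‖ := by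
  rw [norm_eq_sqrt_norm_inner_self (A := A), Real.sq_sqrt (norm_nonneg _)]

lemma inner_sub_op_smul_inner_sub_op_smul_inner {x u v : E} (hx : ⟪x, x⟫ = 1)
    (hv : ⟪v, x⟫ = ⟪x, v⟫) :
    ⟪u - x <• ⟪u, x⟫, v - x <• ⟪v, x⟫⟫ = ⟪u, v⟫ - ⟪u, x⟫ * ⟪v, x⟫ := by
  rw [inner_sub_left, inner_sub_right, inner_sub_right, inner_op_smul_right, inner_op_smul_left,
    inner_op_smul_left, inner_op_smul_right, hx, one_mul, ← hv, sub_self, sub_zero]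

end

lemma inner_swap_mul_inner_le {x y : E} : ⟪y, x⟫ * ⟪x, y⟫ ≤ ‖x‖ ^ 2 • ⟪y, y⟫ := by
  rcases eq_or_ne x 0 with rfl | hx
  · rw [inner_zero_right, zero_mul]
    exact smul_nonneg (sq_nonneg _) inner_self_nonneg
  have hr : 0 < ‖x‖ ^ 2 := by
    rw [norm_sq_eq_norm_inner_self (A := A)]
    exact norm_pos_iff.mpr (mt inner_self.mp hx)
  have hconj : ⟪y, x⟫ * ⟪x, x⟫ * ⟪x, y⟫ ≤ ‖x‖ ^ 2 • (⟪y, x⟫ * ⟪x, y⟫) := by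
    rw [norm_sq_eq_norm_inner_self (A := A), ← star_inner x y]
    exact CStarAlgebra.star_left_conjugate_le_norm_smul (star_inner x x)
  set r : ℝ := ‖x‖ ^ 2
  have hv : 0 ≤ ⟪y, x⟫ * ⟪x, x⟫ * ⟪x, y⟫ - r • (⟪y, x⟫ * ⟪x, y⟫)
      - (r • (⟪y, x⟫ * ⟪x, y⟫) - r • r • ⟪y, y⟫) := by
    convert inner_self_nonneg (A := A) (x := x <• ⟪x, y⟫ - (r : ℂ) • y) using 1
    simp only [inner_sub_left, inner_sub_right, inner_op_smul_right, inner_op_smul_left,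
      inner_smul_left_real, inner_smul_right_real, star_inner, sub_mul, smul_mul_assoc,
      smul_sub, mul_assoc]
  have hscaled : r • (⟪y, x⟫ * ⟪x, y⟫) ≤ r • (r • ⟪y, y⟫) := by
    have := add_nonneg hv (sub_nonneg.mpr hconj)
    rw [← sub_nonneg]
    convert this using 1
    abel
  exact (smul_le_smul_iff_of_pos_left hr).mp hscaled

variable (E) in
lemma norm_inner_le {x y : E} : ‖⟪x, y⟫‖ ≤ ‖x‖ * ‖y‖ := by
  have hsq : ‖⟪x, y⟫‖ ^ 2 ≤ (‖x‖ * ‖y‖) ^ 2 := calc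
    ‖⟪x, y⟫‖ ^ 2 = ‖⟪y, x⟫ * ⟪x, y⟫‖ := by
        rw [← star_inner x y, CStarRing.norm_star_mul_self, sq]
    _ ≤ ‖‖x‖ ^ 2 • ⟪y, y⟫‖ := CStarAlgebra.norm_le_norm_of_nonneg_of_le
        (by rw [← star_inner x y]; exact star_mul_self_nonneg _) inner_swap_mul_inner_le
    _ = (‖x‖ * ‖y‖) ^ 2 := by
        rw [norm_smul, Real.norm_of_nonneg (sq_nonneg _), ← norm_sq_eq_norm_inner_self, mul_pow]
  have hnorm : ∀ z : E, 0 ≤ ‖z‖ := fun z => by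
    rw [norm_eq_sqrt_norm_inner_self (A := A) z]; exact Real.sqrt_nonneg _
  exact (pow_le_pow_iff_left₀ (norm_nonneg _) (mul_nonneg (hnorm x) (hnorm y)) two_ne_zero).mp hsq

end CStarModuleRight

open CStarModuleRight in
theorem norm_uncertainty_ge_inner_general
(T S : E →ₗ[ℂ] E)
    (hS : ∀ y z : E, ⟪S y, z⟫ = ⟪y, S z⟫)
    (x : E) (hx : ⟪x, x⟫ = 1) :
    ‖⟪T x, S x⟫ - ⟪T x, x⟫ * ⟪S x, x⟫‖ ≤
      ‖T x - x <• ⟪T x, x⟫‖ * ‖S x - x <• ⟪S x, x⟫‖ := by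
  rw [← inner_sub_op_smul_inner_sub_op_smul_inner hx (hS x x)]
  exact norm_inner_le E

/-- Theorem NH (v), first inequality. -/
theorem norm_uncertainty_ge_inner
(T S : E →ₗ[ℂ] E)
    (hTA : ∀ (a : A) (y : E), T (y <• a) = T y <• a)
    (hSA : ∀ (a : A) (y : E), S (y <• a) = S y <• a)
    (hT : ∀ y z : E, ⟪T y, z⟫ = ⟪y, T z⟫) (hS : ∀ y z : E, ⟪S y, z⟫ = ⟪y, S z⟫)
    (hTb : ∃ C : ℝ, ∀ y : E, ‖T y‖ ≤ C * ‖y‖) (hSb : ∃ C : ℝ, ∀ y : E, ‖S y‖ ≤ C * ‖y‖)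
    (x : E) (hx : ⟪x, x⟫ = 1) :
    ‖⟪T x, S x⟫ - ⟪T x, x⟫ * ⟪S x, x⟫‖ ≤
      ‖T x - x <• ⟪T x, x⟫‖ * ‖S x - x <• ⟪S x, x⟫‖ :=
  norm_uncertainty_ge_inner_general T S hS x hx
end

section
/- Let E be a Hilbert C*-module over a unital C*-algebra A, and let T, S be bounded adjointable self-adjoint operators on E. For x ∈ E with ⟨x,x⟩ = 1, Δ_x(T)·Δ_x(S) ≥ (1/2)‖⟨[T,S]x,x⟩ + [⟨Tx,x⟩,⟨Sx,x⟩]‖ (noncommutative Heisenberg–Robertson uncertainty principle). -/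
open scoped RightActions

class OldRightCStarModule (A E : Type*) [NonUnitalSemiring A] [StarRing A]
    [Module ℂ A] [AddCommGroup E] [Module ℂ E] [PartialOrder A] [SMul Aᵐᵒᵖ E] [Norm A] [Norm E]
    extends Inner A E where
  inner_add_right {x} {y} {z} : inner x (y + z) = inner x y + inner x z
  inner_self_nonneg {x} : 0 ≤ inner x x
  inner_self {x} : inner x x = 0 ↔ x = 0
  inner_op_smul_right {a : A} {x y : E} : inner x (y <• a) = inner x y * a
  inner_smul_right_complex {z : ℂ} {x} {y} : inner x (z • y) = z • inner x y
  star_inner x y : star (inner x y) = inner y x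
  norm_eq_sqrt_norm_inner_self x : ‖x‖ = √‖inner x x‖

variable {A E : Type*} [CStarAlgebra A] [PartialOrder A] [StarOrderedRing A]
  [AddCommGroup E] [Module ℂ E] [SMul Aᵐᵒᵖ E] [Norm E] [OldRightCStarModule A E]

local notation "⟪" x ", " y "⟫" => (inner A x y : A)

/-! With `u = T x - x <• ⟪x, T x⟫` and `v = S x - x <• ⟪x, S x⟫`, self-adjointness and
`⟪x, x⟫ = 1` turn `⟪[T, S] x, x⟫ + [⟪T x, x⟫, ⟪S x, x⟫]` into
`⟪v, u⟫ - ⟪u, v⟫ = star ⟪u, v⟫ - ⟪u, v⟫`, whose norm is at most `2 ‖⟪u, v⟫‖ ≤ 2 ‖u‖ ‖v‖` by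
the `A`-valued Cauchy–Schwarz inequality `⟪y, x⟫ * ⟪x, y⟫ ≤ ‖x‖² • ⟪y, y⟫`. -/

namespace OldRightCStarModule

section Algebraic

omit [StarOrderedRing A]

lemma inner_neg_right {x y : E} : ⟪x, -y⟫ = -⟪x, y⟫ := by
  rw [← neg_one_smul ℂ y, inner_smul_right_complex, neg_one_smul]

lemma inner_sub_right {x y z : E} : ⟪x, y - z⟫ = ⟪x, y⟫ - ⟪x, z⟫ := by
  rw [sub_eq_add_neg, inner_add_right, inner_neg_right, ← sub_eq_add_neg]

lemma inner_sub_left {x y z : E} : ⟪x - y, z⟫ = ⟪x, z⟫ - ⟪y, z⟫ := by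
  rw [← star_inner, inner_sub_right, star_sub, star_inner, star_inner]

lemma inner_zero_left {y : E} : ⟪(0 : E), y⟫ = 0 := by
  rw [← sub_self (0 : E), inner_sub_left, sub_self]

lemma inner_op_smul_left {a : A} {x y : E} : ⟪x <• a, y⟫ = star a * ⟪x, y⟫ := by
  rw [← star_inner, inner_op_smul_right, star_mul, star_inner]

lemma inner_ofReal_smul_left {c : ℝ} {x y : E} : ⟪(c : ℂ) • x, y⟫ = c • ⟪x, y⟫ := by
  rw [← star_inner, inner_smul_right_complex, star_smul, star_inner, Complex.star_def,
    Complex.conj_ofReal, Complex.coe_smul]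

lemma inner_ofReal_smul_right {c : ℝ} {x y : E} : ⟪x, (c : ℂ) • y⟫ = c • ⟪x, y⟫ := by
  rw [inner_smul_right_complex, Complex.coe_smul]

lemma norm_sq_eq (x : E) : ‖x‖ ^ 2 = ‖⟪x, x⟫‖ := by
  rw [norm_eq_sqrt_norm_inner_self (A := A), Real.sq_sqrt (norm_nonneg _)]

lemma inner_sub_proj_sub_proj {x : E} (hx : ⟪x, x⟫ = 1) (y z : E) :
    ⟪y - x <• ⟪x, y⟫, z - x <• ⟪x, z⟫⟫ = ⟪y, z⟫ - ⟪y, x⟫ * ⟪x, z⟫ := by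
  simp only [inner_sub_left, inner_sub_right, inner_op_smul_left, inner_op_smul_right, hx,
    mul_one, sub_mul]
  abel

end Algebraic

lemma inner_mul_inner_swap_le (x y : E) : ⟪y, x⟫ * ⟪x, y⟫ ≤ ‖x‖ ^ 2 • ⟪y, y⟫ := by
  rcases eq_or_ne x 0 with rfl | hx0
  · simp [norm_eq_sqrt_norm_inner_self (A := A) (0 : E), inner_zero_left]
  rw [norm_sq_eq (A := A)]
  set c : ℝ := ‖⟪x, x⟫‖
  have hc : 0 < c := norm_pos_iff.mpr fun h ↦ hx0 (inner_self.mp h)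
  obtain ⟨a, ha⟩ : ∃ a, ⟪x, y⟫ = a := ⟨_, rfl⟩
  have hsa : ⟪y, x⟫ = star a := by rw [← ha, star_inner]
  have hconj : star a * ⟪x, x⟫ * a ≤ c • (star a * a) :=
    CStarAlgebra.star_left_conjugate_le_norm_smul (hb := star_inner x x)
  have hexp : ⟪x <• a - (c : ℂ) • y, x <• a - (c : ℂ) • y⟫
      = star a * ⟪x, x⟫ * a - c • (star a * a) - c • (star a * a) + c • (c • ⟪y, y⟫) := by
    simp only [inner_sub_left, inner_sub_right, inner_op_smul_left, inner_op_smul_right,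
      inner_ofReal_smul_left, inner_ofReal_smul_right, ha, hsa, sub_mul, smul_sub,
      smul_mul_assoc, mul_assoc]
    abel
  have hle : c • (star a * a) ≤ c • (c • ⟪y, y⟫) := by
    rw [← sub_nonneg]
    calc (0 : A) ≤ _ := inner_self_nonneg.trans_eq hexp
      _ ≤ c • (star a * a) - c • (star a * a) - c • (star a * a) + c • (c • ⟪y, y⟫) := by
        gcongr
      _ = _ := by abel
  rw [hsa, ha]
  exact (smul_le_smul_iff_of_pos_left hc).mp hle

lemma norm_inner_le (x y : E) : ‖⟪x, y⟫‖ ≤ ‖x‖ * ‖y‖ := by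
  have hsq : ‖⟪x, y⟫‖ ^ 2 ≤ (‖x‖ * ‖y‖) ^ 2 :=
    calc ‖⟪x, y⟫‖ ^ 2 = ‖⟪y, x⟫ * ⟪x, y⟫‖ := by
          rw [← star_inner x y, CStarRing.norm_star_mul_self, pow_two]
      _ ≤ ‖‖x‖ ^ 2 • ⟪y, y⟫‖ := by
          refine CStarAlgebra.norm_le_norm_of_nonneg_of_le ?_ (inner_mul_inner_swap_le x y)
          rw [← star_inner x y]
          exact star_mul_self_nonneg _
      _ = (‖x‖ * ‖y‖) ^ 2 := by
          rw [norm_smul, ← norm_sq_eq (A := A) y, Real.norm_of_nonneg (sq_nonneg _), mul_pow]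
  have hnonneg : 0 ≤ ‖x‖ * ‖y‖ := by
    rw [norm_eq_sqrt_norm_inner_self (A := A) x, norm_eq_sqrt_norm_inner_self (A := A) y]
    positivity
  exact (pow_le_pow_iff_left₀ (norm_nonneg _) hnonneg two_ne_zero).mp hsq

lemma norm_inner_swap_sub_inner_le (u v : E) : ‖⟪v, u⟫ - ⟪u, v⟫‖ ≤ 2 * (‖u‖ * ‖v‖) :=
  calc ‖⟪v, u⟫ - ⟪u, v⟫‖ ≤ ‖⟪v, u⟫‖ + ‖⟪u, v⟫‖ := norm_sub_le _ _
    _ = 2 * ‖⟪u, v⟫‖ := by rw [← star_inner u v, norm_star, two_mul]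
    _ ≤ 2 * (‖u‖ * ‖v‖) := by gcongr; exact norm_inner_le u v

end OldRightCStarModule

theorem noncommutative_heisenberg_robertson_general
(T S : E →ₗ[ℂ] E)
    (hT : ∀ y z : E, ⟪T y, z⟫ = ⟪y, T z⟫) (hS : ∀ y z : E, ⟪S y, z⟫ = ⟪y, S z⟫)
    (x : E) (hx : ⟪x, x⟫ = 1) :
    (1 / 2 : ℝ) * ‖⟪T (S x) - S (T x), x⟫ + (⟪T x, x⟫ * ⟪S x, x⟫ - ⟪S x, x⟫ * ⟪T x, x⟫)‖ ≤
      ‖T x - x <• ⟪T x, x⟫‖ * ‖S x - x <• ⟪S x, x⟫‖ := by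
  rw [hT x x, hS x x]
  have hcomm : ⟪T (S x) - S (T x), x⟫ + (⟪x, T x⟫ * ⟪x, S x⟫ - ⟪x, S x⟫ * ⟪x, T x⟫) =
      ⟪S x - x <• ⟪x, S x⟫, T x - x <• ⟪x, T x⟫⟫ - ⟪T x - x <• ⟪x, T x⟫, S x - x <• ⟪x, S x⟫⟫ := by
    rw [OldRightCStarModule.inner_sub_proj_sub_proj hx,
      OldRightCStarModule.inner_sub_proj_sub_proj hx, OldRightCStarModule.inner_sub_left,
      hT (S x) x, hS (T x) x, hT x x, hS x x]
    abel
  rw [hcomm]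
  linarith [OldRightCStarModule.norm_inner_swap_sub_inner_le (A := A)
    (T x - x <• ⟪x, T x⟫) (S x - x <• ⟪x, S x⟫)]

/-- Noncommutative Heisenberg–Robertson uncertainty principle. -/
theorem noncommutative_heisenberg_robertson
(T S : E →ₗ[ℂ] E)
    (hTA : ∀ (a : A) (y : E), T (y <• a) = T y <• a)
    (hSA : ∀ (a : A) (y : E), S (y <• a) = S y <• a)
    (hT : ∀ y z : E, ⟪T y, z⟫ = ⟪y, T z⟫) (hS : ∀ y z : E, ⟪S y, z⟫ = ⟪y, S z⟫)
    (hTb : ∃ C : ℝ, ∀ y : E, ‖T y‖ ≤ C * ‖y‖) (hSb : ∃ C : ℝ, ∀ y : E, ‖S y‖ ≤ C * ‖y‖)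
    (x : E) (hx : ⟪x, x⟫ = 1) :
    (1 / 2 : ℝ) * ‖⟪T (S x) - S (T x), x⟫ + (⟪T x, x⟫ * ⟪S x, x⟫ - ⟪S x, x⟫ * ⟪T x, x⟫)‖ ≤
      ‖T x - x <• ⟪T x, x⟫‖ * ‖S x - x <• ⟪S x, x⟫‖ :=
  noncommutative_heisenberg_robertson_general T S hT hS x hx
end

section
/- Let E be a Hilbert C*-module over a commutative unital C*-algebra A, and let T, S be bounded adjointable self-adjoint operators on E. For x ∈ E with ⟨x,x⟩ = 1, Δ_x(S)²·d_x(T)² + Δ_x(T)²·d_x(S)² ≥ (1/2)[(⟨{T,S}x,x⟩ − 2⟨Tx,x⟩⟨Sx,x⟩)² − ⟨[T,S]x,x⟩²] as self-adjoint elements of A. -/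
/-!
Write `t = ⟪T x, x⟫`, `s = ⟪S x, x⟫` and let `u = T x - x t`, `v = S x - x s` be the components of
`T x`, `S x` orthogonal to `x`. Self-adjointness gives `⟪u, u⟫ = d_x(T)²`, `⟪v, v⟫ = d_x(S)²`,
`⟪{T,S}x, x⟫ - 2ts = ⟪u, v⟫ + ⟪v, u⟫` and `⟪[T,S]x, x⟫ = ⟪v, u⟫ - ⟪u, v⟫`, so the lower bound
`(1/2)[…]` equals `⟪u, v⟫⟪v, u⟫ + ⟪v, u⟫⟪u, v⟫`. Each of the two summands is bounded by the
Cauchy–Schwarz inequality of Hilbert C*-modules.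
-/

open scoped RightActions

class CStarModuleOld (A : outParam <| Type*) (E : Type*) [NonUnitalSemiring A] [StarRing A]
    [Module ℂ A] [AddCommGroup E] [Module ℂ E] [PartialOrder A] [SMul Aᵐᵒᵖ E] [Norm A] [Norm E]
    extends Inner A E where
  inner_add_right {x} {y} {z} : inner x (y + z) = inner x y + inner x z
  inner_self_nonneg {x} : 0 ≤ inner x x
  inner_self {x} : inner x x = 0 ↔ x = 0
  inner_op_smul_right {a : A} {x y : E} : inner x (y <• a) = inner x y * a
  inner_smul_right_complex {z : ℂ} {x} {y} : inner x (z • y) = z • inner x y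
  star_inner x y : star (inner x y) = inner y x
  norm_eq_sqrt_norm_inner_self x : ‖x‖ = Real.sqrt ‖inner x x‖

variable {A E : Type*} [CommCStarAlgebra A] [PartialOrder A] [StarOrderedRing A]
  [AddCommGroup E] [Module ℂ E] [SMul Aᵐᵒᵖ E] [Norm E] [CStarModuleOld A E]

local notation "⟪" x ", " y "⟫" => (inner A x y : A)

namespace CStarModuleOld

section Ring

variable {R M : Type*} [Ring R] [StarRing R] [Module ℂ R] [PartialOrder R] [Norm R]
  [AddCommGroup M] [Module ℂ M] [SMul Rᵐᵒᵖ M] [Norm M] [CStarModuleOld R M]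

lemma inner_add_left (x y z : M) : inner R (x + y) z = inner R x z + inner R y z := by
  rw [← star_inner z, CStarModuleOld.inner_add_right, star_add, star_inner, star_inner]

lemma inner_sub_left (x y z : M) : inner R (x - y) z = inner R x z - inner R y z :=
  eq_sub_of_add_eq (by rw [← inner_add_left, sub_add_cancel])

lemma inner_sub_right (x y z : M) : inner R x (y - z) = inner R x y - inner R x z :=
  eq_sub_of_add_eq (by rw [← CStarModuleOld.inner_add_right, sub_add_cancel])

lemma inner_op_smul_left (a : R) (x y : M) : inner R (x <• a) y = star a * inner R x y := by
  rw [← star_inner y, CStarModuleOld.inner_op_smul_right, star_mul, star_inner]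

lemma inner_sub_proj_sub_proj {x : M} (hx : inner R x x = 1) (y z : M) :
    inner R (y - x <• inner R x y) (z - x <• inner R x z) =
      inner R y z - inner R y x * inner R x z := by
  simp only [inner_sub_left, inner_sub_right, inner_op_smul_left,
    CStarModuleOld.inner_op_smul_right, star_inner, hx, mul_one, sub_self, zero_mul, sub_zero]

lemma inner_sub_proj_sub_proj_of_symm {x y z : M} (hx : inner R x x = 1)
    (hy : inner R y x = inner R x y) (hz : inner R z x = inner R x z) :
    inner R (y - x <• inner R y x) (z - x <• inner R z x) =
      inner R y z - inner R y x * inner R z x := by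
  rw [hy, hz, inner_sub_proj_sub_proj hx, hy]

end Ring

lemma inner_mul_inner_swap_le (x y : E) : ⟪x, y⟫ * ⟪y, x⟫ ≤ ‖y‖ ^ 2 • ⟪x, x⟫ := by
  -- Since `A` is commutative, the right action is a left action, as Mathlib's `CStarModule` wants.
  let _ : SMul A E := ⟨fun a y => y <• a⟩
  let _ : CStarModule A E :=
    { toInner := (inferInstance : CStarModuleOld A E).toInner
      inner_add_right := CStarModuleOld.inner_add_right
      inner_self_nonneg := CStarModuleOld.inner_self_nonneg
      inner_self := CStarModuleOld.inner_self
      inner_op_smul_right := fun {a x y} => by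
        change ⟪x, y <• a⟫ = _
        rw [CStarModuleOld.inner_op_smul_right, mul_comm]
      inner_smul_right_complex := CStarModuleOld.inner_smul_right_complex
      star_inner := CStarModuleOld.star_inner
      norm_eq_sqrt_norm_inner_self := CStarModuleOld.norm_eq_sqrt_norm_inner_self }
  rw [mul_comm]
  exact CStarModule.inner_mul_inner_swap_le

end CStarModuleOld

theorem commutative_HRS_modular_general
(T S : E →ₗ[ℂ] E)
    (hT : ∀ y z : E, ⟪T y, z⟫ = ⟪y, T z⟫) (hS : ∀ y z : E, ⟪S y, z⟫ = ⟪y, S z⟫)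
    (x : E) (hx : ⟪x, x⟫ = 1) :
    (2 : ℝ)⁻¹ •
      ((⟪T (S x) + S (T x), x⟫ - 2 * (⟪T x, x⟫ * ⟪S x, x⟫)) ^ 2 -
        ⟪T (S x) - S (T x), x⟫ ^ 2) ≤
    (‖S x - x <• ⟪S x, x⟫‖ ^ 2 : ℝ) • (⟪T x, T x⟫ - ⟪T x, x⟫ ^ 2) +
      (‖T x - x <• ⟪T x, x⟫‖ ^ 2 : ℝ) • (⟪S x, S x⟫ - ⟪S x, x⟫ ^ 2) := by
  set u := T x - x <• ⟪T x, x⟫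
  set v := S x - x <• ⟪S x, x⟫
  have inner_sub_proj {y z : E} :=
    CStarModuleOld.inner_sub_proj_sub_proj_of_symm (y := y) (z := z) hx
  have huu : ⟪u, u⟫ = ⟪T x, T x⟫ - ⟪T x, x⟫ ^ 2 := by
    rw [inner_sub_proj (hT x x) (hT x x), sq]
  have hvv : ⟪v, v⟫ = ⟪S x, S x⟫ - ⟪S x, x⟫ ^ 2 := by
    rw [inner_sub_proj (hS x x) (hS x x), sq]
  have huv : ⟪u, v⟫ = ⟪S (T x), x⟫ - ⟪T x, x⟫ * ⟪S x, x⟫ := by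
    rw [inner_sub_proj (hT x x) (hS x x), hS (T x) x]
  have hvu : ⟪v, u⟫ = ⟪T (S x), x⟫ - ⟪T x, x⟫ * ⟪S x, x⟫ := by
    rw [inner_sub_proj (hS x x) (hT x x), hT (S x) x, mul_comm]
  have key : (⟪T (S x) + S (T x), x⟫ - 2 * (⟪T x, x⟫ * ⟪S x, x⟫)) ^ 2 -
      ⟪T (S x) - S (T x), x⟫ ^ 2 = (2 : ℝ) • (⟪u, v⟫ * ⟪v, u⟫ + ⟪v, u⟫ * ⟪u, v⟫) := by
    rw [huv, hvu, CStarModuleOld.inner_add_left, CStarModuleOld.inner_sub_left, two_smul]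
    ring
  rw [key, inv_smul_smul₀ two_ne_zero, ← huu, ← hvv]
  exact add_le_add (CStarModuleOld.inner_mul_inner_swap_le u v)
    (CStarModuleOld.inner_mul_inner_swap_le v u)

/-- HRS uncertainty, modular form, over a commutative C*-algebra. -/
theorem commutative_HRS_modular
(T S : E →ₗ[ℂ] E)
    (hTA : ∀ (a : A) (y : E), T (y <• a) = T y <• a)
    (hSA : ∀ (a : A) (y : E), S (y <• a) = S y <• a)
    (hT : ∀ y z : E, ⟪T y, z⟫ = ⟪y, T z⟫) (hS : ∀ y z : E, ⟪S y, z⟫ = ⟪y, S z⟫)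
    (hTb : ∃ C : ℝ, ∀ y : E, ‖T y‖ ≤ C * ‖y‖) (hSb : ∃ C : ℝ, ∀ y : E, ‖S y‖ ≤ C * ‖y‖)
    (x : E) (hx : ⟪x, x⟫ = 1) :
    (2 : ℝ)⁻¹ •
      ((⟪T (S x) + S (T x), x⟫ - 2 * (⟪T x, x⟫ * ⟪S x, x⟫)) ^ 2 -
        ⟪T (S x) - S (T x), x⟫ ^ 2) ≤
    (‖S x - x <• ⟪S x, x⟫‖ ^ 2 : ℝ) • (⟪T x, T x⟫ - ⟪T x, x⟫ ^ 2) +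
      (‖T x - x <• ⟪T x, x⟫‖ ^ 2 : ℝ) • (⟪S x, S x⟫ - ⟪S x, x⟫ ^ 2) :=
  commutative_HRS_modular_general T S hT hS x hx
end

section
/- Let E be a Hilbert C*-module over a commutative unital C*-algebra A, and let T, S be bounded adjointable self-adjoint operators on E. For x ∈ E with ⟨x,x⟩ = 1, Δ_x(T)·Δ_x(S) ≥ (1/2)‖⟨[T,S]x,x⟩‖. -/
open scoped RightActions

variable {A E : Type*} [CommCStarAlgebra A] [PartialOrder A] [StarOrderedRing A]
  [AddCommGroup E] [Module ℂ E] [SMul A E] [Norm E] [CStarModule A E]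

local notation "⟪" x ", " y "⟫" => (inner A x y : A)

/-!
With `u = T x - ⟪T x, x⟫ • x` and `v = S x - ⟪S x, x⟫ • x`, the normalisation `⟪x, x⟫ = 1` and the
symmetry of `T` and `S` give `⟪u, v⟫ = ⟪T x, S x⟫ - ⟪S x, x⟫ * ⟪T x, x⟫` and the same with the
roles exchanged. Since `A` is commutative the two products cancel in `⟪v, u⟫ - ⟪u, v⟫`, which is
therefore `⟪[T, S] x, x⟫`; Cauchy–Schwarz bounds each of the two terms by `‖u‖ * ‖v‖`.
-/

open scoped InnerProductSpace

namespace CStarModule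

section Ring

variable {R M : Type*} [Ring R] [StarRing R] [Module ℂ R] [PartialOrder R] [Norm R]
  [AddCommGroup M] [Module ℂ M] [SMul R M] [Norm M] [CStarModule R M]

lemma isSelfAdjoint_inner_apply_self {T : M → M} (hT : ∀ y z : M, ⟪T y, z⟫_R = ⟪y, T z⟫_R)
    (x : M) : IsSelfAdjoint ⟪T x, x⟫_R := by
  rw [IsSelfAdjoint, star_inner, hT]

variable [StarModule ℂ R]

lemma inner_sub_inner_smul_self {x : M} (hx : ⟪x, x⟫_R = 1) (y : M) {z : M}
    (hz : IsSelfAdjoint ⟪z, x⟫_R) :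
    ⟪y - ⟪y, x⟫_R • x, z - ⟪z, x⟫_R • x⟫_R = ⟪y, z⟫_R - ⟪z, x⟫_R * ⟪y, x⟫_R := by
  have hxz : ⟪x, z⟫_R = ⟪z, x⟫_R := by rw [← star_inner, hz.star_eq]
  simp only [inner_sub_left, inner_sub_right, inner_op_smul_left, inner_op_smul_right, hx,
    hxz]
  noncomm_ring

end Ring

lemma inner_commutator_apply_self {R M : Type*} [CommRing R] [StarRing R] [Module ℂ R]
    [StarModule ℂ R] [PartialOrder R] [Norm R] [AddCommGroup M] [Module ℂ M] [SMul R M] [Norm M]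
    [CStarModule R M] {T S : M → M} (hT : ∀ y z : M, ⟪T y, z⟫_R = ⟪y, T z⟫_R)
    (hS : ∀ y z : M, ⟪S y, z⟫_R = ⟪y, S z⟫_R) {x : M} (hx : ⟪x, x⟫_R = 1) :
    ⟪T (S x) - S (T x), x⟫_R =
      ⟪S x - ⟪S x, x⟫_R • x, T x - ⟪T x, x⟫_R • x⟫_R -
        ⟪T x - ⟪T x, x⟫_R • x, S x - ⟪S x, x⟫_R • x⟫_R := by
  rw [inner_sub_inner_smul_self hx _ (isSelfAdjoint_inner_apply_self hT x),
    inner_sub_inner_smul_self hx _ (isSelfAdjoint_inner_apply_self hS x), inner_sub_left,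
    hT (S x) x, hS (T x) x, mul_comm ⟪S x, x⟫_R]
  abel

lemma norm_inner_sub_inner_swap_le {R M : Type*} [NonUnitalCStarAlgebra R] [PartialOrder R]
    [StarOrderedRing R] [AddCommGroup M] [Module ℂ M] [SMul R M] [Norm M] [CStarModule R M]
    (u v : M) : ‖⟪v, u⟫_R - ⟪u, v⟫_R‖ ≤ 2 * (‖u‖ * ‖v‖) :=
  calc ‖⟪v, u⟫_R - ⟪u, v⟫_R‖ ≤ ‖⟪v, u⟫_R‖ + ‖⟪u, v⟫_R‖ := norm_sub_le _ _
    _ ≤ ‖v‖ * ‖u‖ + ‖u‖ * ‖v‖ := add_le_add (norm_inner_le M) (norm_inner_le M)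
    _ = 2 * (‖u‖ * ‖v‖) := by ring

end CStarModule

open CStarModule in
theorem commutative_heisenberg_robertson_general
(T S : E →ₗ[ℂ] E)
    (hT : ∀ y z : E, ⟪T y, z⟫ = ⟪y, T z⟫) (hS : ∀ y z : E, ⟪S y, z⟫ = ⟪y, S z⟫)
    (x : E) (hx : ⟪x, x⟫ = 1) :
    (1 / 2 : ℝ) * ‖⟪T (S x) - S (T x), x⟫‖ ≤
      ‖T x - ⟪T x, x⟫ • x‖ * ‖S x - ⟪S x, x⟫ • x‖ := by
  rw [inner_commutator_apply_self hT hS hx]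
  linarith [norm_inner_sub_inner_swap_le (R := A) (T x - ⟪T x, x⟫ • x) (S x - ⟪S x, x⟫ • x)]

/-- Heisenberg–Robertson uncertainty over a commutative C*-algebra. -/
theorem commutative_heisenberg_robertson
(T S : E →ₗ[ℂ] E)
    (hTA : ∀ (a : A) (y : E), T (a • y) = a • T y)
    (hSA : ∀ (a : A) (y : E), S (a • y) = a • S y)
    (hT : ∀ y z : E, ⟪T y, z⟫ = ⟪y, T z⟫) (hS : ∀ y z : E, ⟪S y, z⟫ = ⟪y, S z⟫)
    (hTb : ∃ C : ℝ, ∀ y : E, ‖T y‖ ≤ C * ‖y‖) (hSb : ∃ C : ℝ, ∀ y : E, ‖S y‖ ≤ C * ‖y‖)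
    (x : E) (hx : ⟪x, x⟫ = 1) :
    (1 / 2 : ℝ) * ‖⟪T (S x) - S (T x), x⟫‖ ≤
      ‖T x - ⟪T x, x⟫ • x‖ * ‖S x - ⟪S x, x⟫ • x‖ :=
  commutative_heisenberg_robertson_general T S hT hS x hx
end
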